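/- Let R be an integral domain, C̃ and C̃' S-complexes over R, and i, j ∈ ℤ. Then J_i(C̃)·J_j(C̃') ⊆ J_{i+j}(C̃ ⊗ C̃'). -/

import Mathlib

/-!  S-complexes over a commutative ring `R` (following Daemi–Scaduto).

An S-complex is a ℤ-graded finitely generated free chain complex
`C̃ = C ⊕ C[1] ⊕ R` determined by the data of `C` together with maps
`d, v, δ₁, δ₂`.  We encode the graded module `C` by a single module `Tot`
together with an internal ℤ-grading by submodules, and we carry the sign
map `ε` (multiplication by `(-1)^i` on the degree `i` part) as data. -/

universe u

/-- The data of an S-complex over `R`: a module `Tot` (the total module of the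
ℤ-graded module `C_*`), its grading, the sign map `ε`, and the structure maps
`d : C_* → C_{*-1}`, `v : C_* → C_{*-2}`, `δ₁ : C_* → R` (supported in degree 1),
`δ₂ : R → C_{-2}`. -/
structure SComplexData (R : Type u) [CommRing R] where
  Tot : Type u
  [acg : AddCommGroup Tot]
  [mod : Module R Tot]
  grading : ℤ → Submodule R Tot
  sign : Tot →ₗ[R] Tot
  d : Tot →ₗ[R] Tot
  v : Tot →ₗ[R] Tot
  δ₁ : Tot →ₗ[R] R
  δ₂ : R →ₗ[R] Tot

attribute [instance] SComplexData.acg SComplexData.mod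

namespace SComplexData

variable {R : Type u} [CommRing R]

/-- The axioms making the data of `X : SComplexData R` into a genuine S-complex:
the grading is an internal direct sum decomposition into finitely generated free
pieces, the sign map is `(-1)^i` on the degree `i` piece, the structure maps are
graded of the appropriate degrees (`δ₁` supported on `C_1`, `δ₂` valued in `C_{-2}`),
and the S-complex relations `d∘d = 0`, `δ₁∘d = 0`, `d∘δ₂ = 0`,
`d∘v − v∘d − δ₂∘δ₁ = 0` hold; the latter are equivalent to `d̃ ∘ d̃ = 0` for the
differential `d̃(α, β, r) = (dα, vα − dβ + δ₂ r, δ₁ α)` on `C̃ = C ⊕ C[1] ⊕ R`. -/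
structure IsSComplex (X : SComplexData R) : Prop where
  internal : DirectSum.IsInternal X.grading
  free : ∀ i : ℤ, Module.Free R ↥(X.grading i)
  finite : Module.Finite R X.Tot
  sign_spec : ∀ i : ℤ, ∀ x ∈ X.grading i, X.sign x = if Even i then x else -x
  d_deg : ∀ i : ℤ, (X.grading i).map X.d ≤ X.grading (i - 1)
  v_deg : ∀ i : ℤ, (X.grading i).map X.v ≤ X.grading (i - 2)
  δ₁_deg : ∀ i : ℤ, i ≠ 1 → ∀ x ∈ X.grading i, X.δ₁ x = 0
  δ₂_deg : LinearMap.range X.δ₂ ≤ X.grading (-2)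
  d_d : X.d ∘ₗ X.d = 0
  δ₁_d : X.δ₁ ∘ₗ X.d = 0
  d_δ₂ : X.d ∘ₗ X.δ₂ = 0
  d_v : X.d ∘ₗ X.v - X.v ∘ₗ X.d - X.δ₂ ∘ₗ X.δ₁ = 0

/-- A morphism of S-complexes `λ̃ : C̃ → C̃'`, i.e. a degree-0 chain map
`λ̃(α, β, r) = (λ α, μ α + λ β + Δ₂ r, Δ₁ α + r)`, recorded through its
components `λ, μ, Δ₁, Δ₂` (here `l` stands for `λ`). -/
structure SMorphism (X Y : SComplexData R) where
  l : X.Tot →ₗ[R] Y.Tot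
  μ : X.Tot →ₗ[R] Y.Tot
  Δ₁ : X.Tot →ₗ[R] R
  Δ₂ : R →ₗ[R] Y.Tot
  l_deg : ∀ i : ℤ, (X.grading i).map l ≤ Y.grading i
  μ_deg : ∀ i : ℤ, (X.grading i).map μ ≤ Y.grading (i - 1)
  Δ₁_deg : ∀ i : ℤ, i ≠ 0 → ∀ x ∈ X.grading i, Δ₁ x = 0
  Δ₂_deg : LinearMap.range Δ₂ ≤ Y.grading (-1)
  comm_d : l ∘ₗ X.d = Y.d ∘ₗ l
  comm_δ₁ : Δ₁ ∘ₗ X.d + X.δ₁ = Y.δ₁ ∘ₗ l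
  comm_δ₂ : Y.d ∘ₗ Δ₂ + l ∘ₗ X.δ₂ = Y.δ₂
  comm_v : μ ∘ₗ X.d + Y.d ∘ₗ μ + l ∘ₗ X.v - Y.v ∘ₗ l + Δ₂ ∘ₗ X.δ₁ - Y.δ₂ ∘ₗ Δ₁ = 0

end SComplexData

/-- Functions `ℕ → M` with finitely many nonzero values (i.e. support bounded
above); this realizes the polynomial module `M[x]`. -/
def NatBdd (R : Type u) [CommRing R] (M : Type u) [AddCommGroup M] [Module R M] :
    Submodule R (ℕ → M) where
  carrier := {f | ∃ N : ℕ, ∀ n : ℕ, N < n → f n = 0}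
  add_mem' := by
    rintro f g ⟨N, hN⟩ ⟨K, hK⟩
    refine ⟨max N K, fun n hn => ?_⟩
    have h1 := hN n (lt_of_le_of_lt (le_max_left N K) hn)
    have h2 := hK n (lt_of_le_of_lt (le_max_right N K) hn)
    show f n + g n = 0
    rw [h1, h2, add_zero]
  zero_mem' := ⟨0, fun _ _ => rfl⟩
  smul_mem' := by
    rintro c f ⟨N, hN⟩
    refine ⟨N, fun n hn => ?_⟩
    show c • f n = 0
    rw [hN n hn, smul_zero]

/-- Functions `ℤ → M` with support bounded above; for `M = R` this realizes the
ring `R[[x⁻¹, x]]` of Laurent series with finitely many positive powers of `x`. -/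
def IntBdd (R : Type u) [CommRing R] (M : Type u) [AddCommGroup M] [Module R M] :
    Submodule R (ℤ → M) where
  carrier := {f | ∃ N : ℤ, ∀ n : ℤ, N < n → f n = 0}
  add_mem' := by
    rintro f g ⟨N, hN⟩ ⟨K, hK⟩
    refine ⟨max N K, fun n hn => ?_⟩
    have h1 := hN n (lt_of_le_of_lt (le_max_left N K) hn)
    have h2 := hK n (lt_of_le_of_lt (le_max_right N K) hn)
    show f n + g n = 0
    rw [h1, h2, add_zero]
  zero_mem' := ⟨0, fun _ _ => rfl⟩
  smul_mem' := by
    rintro c f ⟨N, hN⟩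
    refine ⟨N, fun n hn => ?_⟩
    show c • f n = 0
    rw [hN n hn, smul_zero]

/-- The multiplication of `R[[x⁻¹, x]]`, realized as a convolution product on
functions `ℤ → R` with support bounded above. -/
noncomputable def lmul {R : Type u} [CommRing R] (f g : ↥(IntBdd R R)) : ↥(IntBdd R R) :=
  ⟨fun n => ∑ᶠ i : ℤ, f.1 i * g.1 (n - i), by
    obtain ⟨N, hN⟩ := f.2
    obtain ⟨K, hK⟩ := g.2
    refine ⟨N + K, fun n hn => ?_⟩
    apply finsum_eq_zero_of_forall_eq_zero
    intro i
    by_cases h : N < i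
    · rw [hN i h, zero_mul]
    · rw [hK (n - i) (by omega), mul_zero]⟩

namespace SComplexData

variable {R : Type u} [CommRing R]

/-- The carrier of the small equivariant complex `𝔣Ĉ_* = C_{*-1} ⊕ R[x]`,
with `R[x]` realized as finitely supported functions `ℕ → R`. -/
abbrev Small (X : SComplexData R) : Type u := X.Tot × ↥(NatBdd R R)

/-- `Σᵢ vⁱ δ₂(aᵢ)` for a polynomial with coefficients `aᵢ`. -/
noncomputable def sumV (X : SComplexData R) (f : ↥(NatBdd R R)) : X.Tot :=
  ∑ᶠ i : ℕ, (X.v ^ i) (X.δ₂ (f.1 i))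

/-- The differential `𝔡̂(α, Σᵢ aᵢxⁱ) = (dα − Σᵢ vⁱδ₂(aᵢ), 0)` of the small
equivariant complex. -/
noncomputable def smallD (X : SComplexData R) : X.Small → X.Small :=
  fun z => (X.d z.1 - X.sumV z.2, 0)

/-- The `R[x]`-module structure of the small equivariant complex:
`x · (α, p(x)) = (v(α), δ₁(α) + x·p(x))`; this is the action of `x`. -/
noncomputable def xSmall (X : SComplexData R) : X.Small → X.Small :=
  fun z => (X.v z.1, ⟨fun n => if n = 0 then X.δ₁ z.1 else z.2.1 (n - 1), by
    obtain ⟨N, hN⟩ := z.2.2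
    refine ⟨N + 1, fun n hn => ?_⟩
    show (if n = 0 then X.δ₁ z.1 else z.2.1 (n - 1)) = 0
    rw [if_neg (by omega)]
    exact hN (n - 1) (by omega)⟩)

/-- The map `𝔦 : 𝔣Ĉ_* → R[[x⁻¹, x]]`,
`𝔦(α, Σᵢ aᵢxⁱ) = Σ_{i ≤ −1} δ₁v^{−i−1}(α) xⁱ + Σᵢ aᵢxⁱ`. -/
noncomputable def iota (X : SComplexData R) : X.Small → ↥(IntBdd R R) :=
  fun z => ⟨fun n => if n < 0 then X.δ₁ ((X.v ^ (-n - 1).toNat) z.1) else z.2.1 n.toNat, by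
    obtain ⟨N, hN⟩ := z.2.2
    refine ⟨(N : ℤ), fun n hn => ?_⟩
    show (if n < 0 then X.δ₁ ((X.v ^ (-n - 1).toNat) z.1) else z.2.1 n.toNat) = 0
    rw [if_neg (by omega)]
    exact hN n.toNat (by omega)⟩

/-- `𝔍(C̃) = 𝔦(ker 𝔡̂)`, an `R[x]`-submodule of `R[[x⁻¹, x]]`, here recorded
as a set. -/
noncomputable def JJ (X : SComplexData R) : Set ↥(IntBdd R R) :=
  X.iota '' {z | X.smallD z = 0}

/-- `DegEq Q n` means that the Laurent series `Q` is nonzero with `Deg Q = n`,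
i.e. `n` is the largest exponent with nonzero coefficient. -/
def DegEq {R : Type u} [CommRing R] (Q : ↥(IntBdd R R)) (n : ℤ) : Prop :=
  Q.1 n ≠ 0 ∧ ∀ m : ℤ, n < m → Q.1 m = 0

/-- The set of degrees of nonzero elements of `𝔍(C̃)`. -/
noncomputable def degSet (X : SComplexData R) : Set ℤ :=
  {n : ℤ | ∃ Q ∈ X.JJ, DegEq Q n}

/-- The Frøyshov invariant `h(C̃) = −inf {Deg Q : 0 ≠ Q ∈ 𝔍(C̃)}`. -/
noncomputable def hInv (X : SComplexData R) : ℤ := -sInf X.degSet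

/-- The ideal `J_i(C̃) = {a ∈ R : ∃ Q = a·x^{−i} + (lower order terms) ∈ 𝔍(C̃)}`,
recorded as a set. -/
noncomputable def Jideal (X : SComplexData R) (i : ℤ) : Set R :=
  {a : R | ∃ Q ∈ X.JJ, (∀ m : ℤ, -i < m → Q.1 m = 0) ∧ Q.1 (-i) = a}

end SComplexData

namespace SComplexData

open TensorProduct

variable {R : Type u} [CommRing R]

/-- The carrier of the tensor product S-complex:
`C^⊗ = (C ⊗ C') ⊕ (C ⊗ C')[1] ⊕ C ⊕ C'`. -/
abbrev TTen (A B : SComplexData R) : Type u :=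
  (A.Tot ⊗[R] B.Tot) × (A.Tot ⊗[R] B.Tot) × A.Tot × B.Tot

/-- Projection onto the first summand `(C ⊗ C')` of `C^⊗`. -/
noncomputable def tp1 (A B : SComplexData R) : TTen A B →ₗ[R] A.Tot ⊗[R] B.Tot :=
  LinearMap.fst R _ _

/-- Projection onto the second summand `(C ⊗ C')[1]` of `C^⊗`. -/
noncomputable def tp2 (A B : SComplexData R) : TTen A B →ₗ[R] A.Tot ⊗[R] B.Tot :=
  (LinearMap.fst R _ _) ∘ₗ (LinearMap.snd R _ _)

/-- Projection onto the third summand `C` of `C^⊗`. -/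
noncomputable def tp3 (A B : SComplexData R) : TTen A B →ₗ[R] A.Tot :=
  (LinearMap.fst R _ _) ∘ₗ (LinearMap.snd R _ _) ∘ₗ (LinearMap.snd R _ _)

/-- Projection onto the fourth summand `C'` of `C^⊗`. -/
noncomputable def tp4 (A B : SComplexData R) : TTen A B →ₗ[R] B.Tot :=
  (LinearMap.snd R _ _) ∘ₗ (LinearMap.snd R _ _) ∘ₗ (LinearMap.snd R _ _)

/-- The degree `k` piece of the grading of `C ⊗ C'`:
the span of the images of `C_i ⊗ C'_{k-i}`. -/
noncomputable def gradedPiece (A B : SComplexData R) (k : ℤ) :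
    Submodule R (A.Tot ⊗[R] B.Tot) :=
  ⨆ i : ℤ, LinearMap.range
    (TensorProduct.map (A.grading i).subtype (B.grading (k - i)).subtype)

/-- The tensor product S-complex `C̃ ⊗ C̃'` of two S-complexes, with chain module
`C^⊗ = (C ⊗ C') ⊕ (C ⊗ C')[1] ⊕ C ⊕ C'` and the block-matrix structure maps of
Daemi–Scaduto (Section 4.5); `ε` denotes the sign map. -/
noncomputable def tensorS (A B : SComplexData R) : SComplexData R where
  Tot := TTen A B
  grading := fun k =>
    (gradedPiece A B k).prod ((gradedPiece A B (k - 1)).prod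
      ((A.grading k).prod (B.grading k)))
  sign := LinearMap.prod
      ((TensorProduct.map A.sign B.sign) ∘ₗ tp1 A B)
      (LinearMap.prod (-((TensorProduct.map A.sign B.sign) ∘ₗ tp2 A B))
        (LinearMap.prod (A.sign ∘ₗ tp3 A B) (B.sign ∘ₗ tp4 A B)))
  d := LinearMap.prod
      -- row 1 :  (d⊗1 + ε⊗d') x₁
      ((TensorProduct.map A.d LinearMap.id + TensorProduct.map A.sign B.d) ∘ₗ tp1 A B)
      (LinearMap.prod
        -- row 2 : (−εv⊗1 + ε⊗v') x₁ + (d⊗1 − ε⊗d') x₂ + (ε⊗δ₂') x₃ − (δ₂⊗1) x₄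
        ((TensorProduct.map A.sign B.v - TensorProduct.map (A.sign ∘ₗ A.v) LinearMap.id) ∘ₗ tp1 A B
          + (TensorProduct.map A.d LinearMap.id - TensorProduct.map A.sign B.d) ∘ₗ tp2 A B
          + ((TensorProduct.map A.sign B.δ₂) ∘ₗ (TensorProduct.rid R A.Tot).symm.toLinearMap) ∘ₗ tp3 A B
          - ((TensorProduct.map A.δ₂ LinearMap.id) ∘ₗ (TensorProduct.lid R B.Tot).symm.toLinearMap) ∘ₗ tp4 A B)
        (LinearMap.prod
          -- row 3 : (ε⊗δ₁') x₁ + d x₃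
          (((TensorProduct.rid R A.Tot).toLinearMap ∘ₗ TensorProduct.map A.sign B.δ₁) ∘ₗ tp1 A B
            + A.d ∘ₗ tp3 A B)
          -- row 4 : (δ₁⊗1) x₁ + d' x₄
          (((TensorProduct.lid R B.Tot).toLinearMap ∘ₗ TensorProduct.map A.δ₁ LinearMap.id) ∘ₗ tp1 A B
            + B.d ∘ₗ tp4 A B)))
  v := LinearMap.prod
      -- row 1 : (v⊗1) x₁ + (δ₂⊗1) x₄
      ((TensorProduct.map A.v LinearMap.id) ∘ₗ tp1 A B
        + ((TensorProduct.map A.δ₂ LinearMap.id) ∘ₗ (TensorProduct.lid R B.Tot).symm.toLinearMap) ∘ₗ tp4 A B)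
      (LinearMap.prod
        -- row 2 : (v⊗1) x₂
        ((TensorProduct.map A.v LinearMap.id) ∘ₗ tp2 A B)
        (LinearMap.prod
          -- row 3 : v x₃
          (A.v ∘ₗ tp3 A B)
          -- row 4 : (δ₁⊗1) x₂ + v' x₄
          (((TensorProduct.lid R B.Tot).toLinearMap ∘ₗ TensorProduct.map A.δ₁ LinearMap.id) ∘ₗ tp2 A B
            + B.v ∘ₗ tp4 A B)))
  δ₁ := A.δ₁ ∘ₗ tp3 A B + B.δ₁ ∘ₗ tp4 A B
  δ₂ := LinearMap.prod 0 (LinearMap.prod 0 (LinearMap.prod A.δ₂ B.δ₂))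

end SComplexData


/-!
If `(α, f)` and `(β, g)` are cycles of the small equivariant complexes, i.e. `dα = Σ fₛ vˢδ₂(1)`
and `d'β = Σ gₜ v'ᵗδ₂'(1)`, then
`(Σ f_{k+m+1} vᵏδ₂(1) ⊗ v'ᵐβ + Σ g_{k+m+1} vᵐα ⊗ v'ᵏδ₂'(1), α ⊗ β, g(v) α, f(v') β)`,
with the nonnegative part of `𝔦(α, f) · 𝔦(β, g)` as polynomial part, is a cycle of the small
equivariant complex of `C̃ ⊗ C̃'`, and its image under `𝔦` is exactly that product. So
`𝔍(C̃) · 𝔍(C̃') ⊆ 𝔍(C̃ ⊗ C̃')`, and multiplying `a x^{-i} + (lower terms)` by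
`b x^{-j} + (lower terms)` gives `ab x^{-i-j} + (lower terms)`.

The relation `dv − vd = δ₂δ₁` enters only through
`d (vᵐ x) = vᵐ (dx) + Σ_{p<m} δ₁(v^{m-1-p} x) vᵖδ₂(1)`; after that, the cycle condition is a
matter of reindexing finite double sums: Cauchy products, and telescoping along antidiagonals.
-/

open Finset

theorem mul_eq_zero_of_le_add {R : Type*} [MulZeroClass R] {F G : ℕ → R} {N K : ℕ}
    (hF : ∀ s, N ≤ s → F s = 0) (hG : ∀ t, N ≤ t → G t = 0) (hK : 2 * N ≤ K) (s t : ℕ)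
    (h : K ≤ s + t) : F s * G t = 0 := by
  rcases le_or_gt N s with hs | hs
  · rw [hF s hs, zero_mul]
  · rw [hG t (by omega), mul_zero]

namespace Finset

section RangeSums

variable {R M : Type*} [CommSemiring R] [AddCommMonoid M] [Module R M]

theorem sum_range_shift_of_eq_zero {f : ℕ → M} {K : ℕ} (h0 : f 0 = 0) (hK : f K = 0) :
    ∑ n ∈ range K, f (n + 1) = ∑ n ∈ range K, f n := by
  rw [← add_zero (∑ n ∈ range K, f (n + 1)), ← h0, ← sum_range_succ', sum_range_succ, hK,
    add_zero]

theorem sum_range_sum_range_eq_sum_antidiag (K : ℕ) (φ : ℕ → ℕ → M)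
    (hφ : ∀ k m, K ≤ k + m → φ k m = 0) :
    ∑ k ∈ range K, ∑ m ∈ range K, φ k m
      = ∑ n ∈ range K, ∑ k ∈ range (n + 1), φ k (n - k) := by
  rw [sum_range_diag_flip]
  refine sum_congr rfl fun k hk => (sum_subset (fun m => by simp only [mem_range]; omega)
    fun m _ hm => hφ k m ?_).symm
  simp only [mem_range] at hk hm
  omega

theorem sum_range_sum_range_smul_eq (K : ℕ) {F : ℕ → R} (hF : ∀ s, K ≤ s → F s = 0)
    (ψ : ℕ → ℕ → M) :
    ∑ k ∈ range K, ∑ m ∈ range K, F (k + m + 1) • ψ k m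
      = ∑ n ∈ range K, F n • ∑ k ∈ range n, ψ k (n - 1 - k) := by
  rw [sum_range_sum_range_eq_sum_antidiag K _ fun k m h => by rw [hF _ (by omega), zero_smul],
    ← sum_range_shift_of_eq_zero (f := fun n => F n • ∑ k ∈ range n, ψ k (n - 1 - k))
      (by rw [sum_range_zero, smul_zero]) (by rw [hF K le_rfl, zero_smul])]
  refine sum_congr rfl fun n _ => ?_
  rw [smul_sum]
  refine sum_congr rfl fun k hk => ?_
  simp only [mem_range] at hk
  rw [show k + (n - k) + 1 = n + 1 by omega, show n + 1 - 1 - k = n - k by omega]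

theorem sum_range_smul_sum_range_eq (K : ℕ) {G : ℕ → R} (hG : ∀ t, K ≤ t → G t = 0)
    (c : ℕ → R) (φ : ℕ → M) :
    ∑ t ∈ range K, G t • ∑ p ∈ range t, c (t - 1 - p) • φ p
      = ∑ p ∈ range K, (∑ q ∈ range K, c q * G (p + 1 + q)) • φ p := by
  simp only [sum_smul]
  rw [sum_range_sum_range_eq_sum_antidiag K _ fun p q h => by
      rw [hG _ (by omega), mul_zero, zero_smul],
    ← sum_range_shift_of_eq_zero (f := fun t => G t • ∑ p ∈ range t, c (t - 1 - p) • φ p)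
      (by rw [sum_range_zero, smul_zero]) (by rw [hG K le_rfl, zero_smul])]
  refine sum_congr rfl fun n _ => ?_
  rw [smul_sum]
  refine sum_congr rfl fun p hp => ?_
  simp only [mem_range] at hp
  rw [smul_smul, mul_comm, show p + 1 + (n - p) = n + 1 by omega,
    show n + 1 - 1 - p = n - p by omega]

theorem sum_range_sum_range_mul_smul_eq (K : ℕ) {F G : ℕ → R}
    (hFG : ∀ s t, K ≤ s + t → F s * G t = 0) (φ : ℕ → M) :
    ∑ s ∈ range K, ∑ t ∈ range K, (F s * G t) • φ (s + t)
      = ∑ n ∈ range K, (∑ s ∈ range (n + 1), F s * G (n - s)) • φ n := by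
  rw [sum_range_sum_range_eq_sum_antidiag K _ fun s t h => by rw [hFG s t h, zero_smul]]
  refine sum_congr rfl fun n _ => ?_
  rw [sum_smul]
  refine sum_congr rfl fun s hs => ?_
  simp only [mem_range] at hs
  rw [show s + (n - s) = n by omega]

theorem sum_range_add_antidiag (φ : ℕ → ℕ → M) (s t : ℕ) :
    ∑ p ∈ range (s + t), φ p (s + t - 1 - p)
      = ∑ k ∈ range s, φ k (s + t - 1 - k) + ∑ k ∈ range t, φ (s + t - 1 - k) k := by
  rw [sum_range_add, ← sum_range_reflect _ t]
  congr 1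
  refine sum_congr rfl fun k hk => ?_
  simp only [mem_range] at hk
  rw [show s + (t - 1 - k) = s + t - 1 - k by omega,
    show s + t - 1 - (s + t - 1 - k) = k by omega]

theorem sum_range_sum_range_smul_sum_range_eq (K : ℕ) {F : ℕ → R}
    (hF : ∀ s, K ≤ s → F s = 0) (c : ℕ → R) (φ : ℕ → ℕ → M) :
    ∑ k ∈ range K, ∑ m ∈ range K, F (k + m + 1) • ∑ p ∈ range m, c (m - 1 - p) • φ k p
      = ∑ n ∈ range K,
          (∑ q ∈ range K, F (n + 1 + q) * c q) • ∑ p ∈ range n, φ p (n - 1 - p) := by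
  have hL : ∀ k ∈ range K,
      ∑ m ∈ range K, F (k + m + 1) • ∑ p ∈ range m, c (m - 1 - p) • φ k p
        = ∑ p ∈ range K, ∑ q ∈ range K, (c q * F (k + p + 1 + q + 1)) • φ k p := by
    intro k _
    rw [sum_range_smul_sum_range_eq K (G := fun m => F (k + m + 1))
      (fun t ht => hF _ (by omega))]
    refine sum_congr rfl fun p _ => ?_
    rw [sum_smul]
    refine sum_congr rfl fun q _ => ?_
    rw [show k + (p + 1 + q) + 1 = k + p + 1 + q + 1 by omega]
  have hR : ∀ q ∈ range K, ∑ n ∈ range K, F (n + 1 + q) • ∑ p ∈ range n, φ p (n - 1 - p)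
      = ∑ k ∈ range K, ∑ p ∈ range K, F (k + p + 1 + 1 + q) • φ k p :=
    fun q _ => (sum_range_sum_range_smul_eq K (F := fun n => F (n + 1 + q))
      (fun s hs => hF _ (by omega)) φ).symm
  calc _ = ∑ k ∈ range K, ∑ p ∈ range K, ∑ q ∈ range K,
          (c q * F (k + p + 1 + q + 1)) • φ k p := sum_congr rfl hL
    _ = ∑ q ∈ range K, c q • ∑ k ∈ range K, ∑ p ∈ range K,
          F (k + p + 1 + 1 + q) • φ k p := by
        simp only [smul_sum, smul_smul]
        refine (sum_congr rfl fun k _ => sum_comm).trans ?_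
        rw [sum_comm]
        refine sum_congr rfl fun q _ => sum_congr rfl fun k _ => sum_congr rfl fun p _ => ?_
        rw [show k + p + 1 + 1 + q = k + p + 1 + q + 1 by omega]
    _ = ∑ q ∈ range K, ∑ n ∈ range K,
          (F (n + 1 + q) * c q) • ∑ p ∈ range n, φ p (n - 1 - p) := by
        refine sum_congr rfl fun q hq => ?_
        rw [← hR q hq, smul_sum]
        exact sum_congr rfl fun n _ => by rw [smul_smul, mul_comm]
    _ = _ := by
        rw [sum_comm]
        exact sum_congr rfl fun n _ => (sum_smul ..).symm

theorem sum_range_sum_range_smul_sum_range_smul_eq (K : ℕ) {F : ℕ → R}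
    (hF : ∀ s, K ≤ s → F s = 0) (G : ℕ → R) (φ : ℕ → ℕ → M) :
    ∑ k ∈ range K, ∑ m ∈ range K, F (k + m + 1) • ∑ t ∈ range K, G t • φ k (m + t)
      = ∑ s ∈ range K, ∑ t ∈ range K,
          (F s * G t) • ∑ k ∈ range s, φ k (s + t - 1 - k) := by
  calc _ = ∑ t ∈ range K, G t • ∑ k ∈ range K, ∑ m ∈ range K, F (k + m + 1) • φ k (m + t) := by
        simp only [smul_sum]
        refine (sum_congr rfl fun k _ => sum_comm).trans ?_
        rw [sum_comm]
        exact sum_congr rfl fun t _ => sum_congr rfl fun k _ => sum_congr rfl fun m _ =>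
          smul_comm _ _ _
    _ = ∑ t ∈ range K, G t • ∑ s ∈ range K, F s • ∑ k ∈ range s, φ k (s - 1 - k + t) := by
        simp only [sum_range_sum_range_smul_eq K hF fun k m => φ k (m + _)]
    _ = _ := by
        simp only [smul_sum, smul_smul]
        rw [sum_comm]
        refine sum_congr rfl fun s _ => sum_congr rfl fun t _ => sum_congr rfl fun k hk => ?_
        simp only [mem_range] at hk
        rw [mul_comm, show s - 1 - k + t = s + t - 1 - k by omega]

theorem sum_antidiag_smul_add_sum_antidiag_smul (K N : ℕ) {F G : ℕ → R}
    (hF : ∀ s, N ≤ s → F s = 0) (hG : ∀ t, N ≤ t → G t = 0) (hK : 2 * N ≤ K)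
    (φ : ℕ → ℕ → M) :
    ∑ k ∈ range K, ∑ m ∈ range K, F (k + m + 1) • ∑ t ∈ range K, G t • φ k (m + t)
      + ∑ k ∈ range K, ∑ m ∈ range K, G (k + m + 1) • ∑ s ∈ range K, F s • φ (m + s) k
    = ∑ n ∈ range K,
        (∑ s ∈ range (n + 1), F s * G (n - s)) • ∑ p ∈ range n, φ p (n - 1 - p) := by
  rw [sum_range_sum_range_smul_sum_range_smul_eq K (fun s hs => hF s (by omega)),
    sum_range_sum_range_smul_sum_range_smul_eq K (fun t ht => hG t (by omega)) F
      fun k m => φ m k, sum_comm (s := range K) (t := range K) (f := fun t s => (G t * F s) • _),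
    ← sum_add_distrib, ← sum_range_sum_range_mul_smul_eq K (mul_eq_zero_of_le_add hF hG hK)]
  refine sum_congr rfl fun s _ => ?_
  rw [← sum_add_distrib]
  refine sum_congr rfl fun t _ => ?_
  rw [mul_comm (G t), add_comm t s, ← smul_add, sum_range_add_antidiag]

end RangeSums

theorem sum_range_sum_range_smul_sub_eq {R M : Type*} [CommSemiring R] [AddCommGroup M]
    [Module R M] (K : ℕ) {F : ℕ → R} (hF : ∀ s, K ≤ s → F s = 0) (ψ : ℕ → ℕ → M) :
    ∑ k ∈ range K, ∑ m ∈ range K, F (k + m + 1) • (ψ k (m + 1) - ψ (k + 1) m)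
      = ∑ n ∈ range K, F n • (ψ 0 n - ψ n 0) := by
  rw [sum_range_sum_range_smul_eq K hF]
  refine sum_congr rfl fun n _ => ?_
  have h := sum_range_sub' (fun k => ψ k (n - k)) n
  rw [Nat.sub_zero, Nat.sub_self] at h
  rw [← h]
  congr 1
  refine sum_congr rfl fun k hk => ?_
  simp only [mem_range] at hk
  rw [show n - 1 - k + 1 = n - k by omega, show n - (k + 1) = n - 1 - k by omega]

end Finset

theorem finsum_int_eq_sum_three_ranges {M : Type*} [AddCommMonoid M] {φ : ℤ → M} {a b : ℤ}
    (hab : a ≤ b) (K : ℕ) (hφ : ∀ k, k < a - K ∨ b + K ≤ k → φ k = 0) :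
    ∑ᶠ k, φ k = ∑ q ∈ range K, φ (a - 1 - q) + ∑ j ∈ range (b - a).toNat, φ (a + j)
      + ∑ q ∈ range K, φ (b + q) := by
  have hsupp : Function.support φ ⊆ Ico (a - K) (b + K) := fun k hk => by
    by_contra h
    simp only [coe_Ico, Set.mem_Ico, not_and_or, not_le, not_lt] at h
    exact hk (hφ k h)
  rw [finsum_eq_sum_of_support_subset φ hsupp,
    ← Ico_union_Ico_eq_Ico (b := a) (by omega) (by omega),
    sum_union (Ico_disjoint_Ico_consecutive _ _ _),
    ← Ico_union_Ico_eq_Ico hab (by omega), sum_union (Ico_disjoint_Ico_consecutive _ _ _)]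
  simp only [Int.Ico_eq_finset_map, sum_map, Function.Embedding.trans_apply,
    Nat.castEmbedding_apply, addLeftEmbedding_apply]
  rw [show (a - (a - K)).toNat = K by omega, show (b + K - b).toNat = K by omega,
    add_assoc, ← sum_range_reflect]
  congr 1
  refine sum_congr rfl fun q hq => ?_
  simp only [mem_range] at hq
  congr 1
  omega

theorem lmul_apply {R : Type*} [CommRing R] (P Q : ↥(IntBdd R R)) (n : ℤ) :
    (lmul P Q).1 n = ∑ᶠ k, P.1 k * Q.1 (n - k) := rfl

section LeadingCoefficient

variable {R : Type*} [CommRing R] {P Q : ↥(IntBdd R R)} {i j : ℤ}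

theorem lmul_apply_eq_zero_of_lt (hP : ∀ m, -i < m → P.1 m = 0)
    (hQ : ∀ m, -j < m → Q.1 m = 0) {n : ℤ} (hn : -(i + j) < n) : (lmul P Q).1 n = 0 := by
  rw [lmul_apply]
  refine finsum_eq_zero_of_forall_eq_zero fun k => ?_
  rcases lt_or_ge (-i) k with hk | hk
  · rw [hP k hk, zero_mul]
  · rw [hQ (n - k) (by omega), mul_zero]

theorem lmul_apply_neg_add (hP : ∀ m, -i < m → P.1 m = 0) (hQ : ∀ m, -j < m → Q.1 m = 0) :
    (lmul P Q).1 (-(i + j)) = P.1 (-i) * Q.1 (-j) := by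
  rw [lmul_apply, finsum_eq_single _ (-i) fun k hk => ?_, show -(i + j) - -i = -j by ring]
  rcases lt_or_gt_of_ne hk with hk | hk
  · rw [hQ (-(i + j) - k) (by omega), mul_zero]
  · rw [hP k hk, zero_mul]

end LeadingCoefficient

namespace SComplexData

open TensorProduct

variable {R : Type u} [CommRing R]

noncomputable def vPowδ₂ (X : SComplexData R) (k : ℕ) : X.Tot := (X.v ^ k) (X.δ₂ 1)

section Tower

variable {X : SComplexData R}

theorem vPowδ₂_zero : X.vPowδ₂ 0 = X.δ₂ 1 := rfl

theorem v_pow_apply (m : ℕ) (x : X.Tot) : X.v ((X.v ^ m) x) = (X.v ^ (m + 1)) x := by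
  rw [pow_succ', Module.End.mul_apply]

theorem vPowδ₂_succ (k : ℕ) : X.vPowδ₂ (k + 1) = X.v (X.vPowδ₂ k) := by
  rw [vPowδ₂, vPowδ₂, pow_succ', Module.End.mul_apply]

theorem pow_v_vPowδ₂ (t k : ℕ) : (X.v ^ t) (X.vPowδ₂ k) = X.vPowδ₂ (t + k) := by
  rw [vPowδ₂, vPowδ₂, ← Module.End.mul_apply, ← pow_add]

theorem δ₂_eq_smul_vPowδ₂ (r : R) : X.δ₂ r = r • X.vPowδ₂ 0 := by
  rw [vPowδ₂_zero, ← map_smul, smul_eq_mul, mul_one]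

theorem sumV_eq_sum {f : ↥(NatBdd R R)} {K : ℕ} (hf : ∀ n, K ≤ n → f.1 n = 0) :
    X.sumV f = ∑ k ∈ range K, f.1 k • X.vPowδ₂ k := by
  rw [sumV, finsum_eq_sum_of_support_subset _ (s := range K) fun k hk => ?_]
  · refine sum_congr rfl fun k _ => ?_
    rw [δ₂_eq_smul_vPowδ₂, map_smul, pow_v_vPowδ₂, add_zero]
  · by_contra h
    simp only [coe_range, Set.mem_Iio, not_lt] at h
    exact hk (by simp only [hf k h, map_zero])

theorem smallD_eq_zero_iff {z : X.Small} : X.smallD z = 0 ↔ X.d z.1 = X.sumV z.2 := by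
  rw [smallD, Prod.mk_eq_zero, sub_eq_zero, and_iff_left rfl]

end Tower

namespace IsSComplex

variable {X : SComplexData R}

theorem d_v_apply (hX : X.IsSComplex) (x : X.Tot) :
    X.d (X.v x) = X.v (X.d x) + X.δ₂ (X.δ₁ x) := by
  have h := LinearMap.congr_fun hX.d_v x
  rwa [LinearMap.sub_apply, LinearMap.sub_apply, sub_sub, LinearMap.zero_apply, sub_eq_zero] at h

theorem vPowδ₂_mem (hX : X.IsSComplex) (k : ℕ) : X.vPowδ₂ k ∈ X.grading (-2 * k - 2) := by
  induction k with
  | zero => simpa [vPowδ₂_zero] using hX.δ₂_deg ⟨1, rfl⟩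
  | succ k ih =>
    rw [vPowδ₂_succ, show -2 * ((k + 1 : ℕ) : ℤ) - 2 = -2 * k - 2 - 2 by push_cast; ring]
    exact hX.v_deg _ (Submodule.mem_map_of_mem ih)

theorem sign_vPowδ₂ (hX : X.IsSComplex) (k : ℕ) : X.sign (X.vPowδ₂ k) = X.vPowδ₂ k := by
  rw [hX.sign_spec _ _ (hX.vPowδ₂_mem k), if_pos ⟨-(k : ℤ) - 1, by ring⟩]

theorem δ₁_vPowδ₂ (hX : X.IsSComplex) (k : ℕ) : X.δ₁ (X.vPowδ₂ k) = 0 :=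
  hX.δ₁_deg _ (by omega) _ (hX.vPowδ₂_mem k)

theorem d_vPowδ₂ (hX : X.IsSComplex) (k : ℕ) : X.d (X.vPowδ₂ k) = 0 := by
  induction k with
  | zero => simpa [vPowδ₂_zero] using LinearMap.congr_fun hX.d_δ₂ 1
  | succ k ih => rw [vPowδ₂_succ, hX.d_v_apply, ih, hX.δ₁_vPowδ₂, map_zero, map_zero, add_zero]

theorem d_pow_v_apply (hX : X.IsSComplex) (x : X.Tot) (m : ℕ) :
    X.d ((X.v ^ m) x)
      = (X.v ^ m) (X.d x) + ∑ p ∈ range m, X.δ₁ ((X.v ^ (m - 1 - p)) x) • X.vPowδ₂ p := by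
  induction m with
  | zero => simp
  | succ m ih =>
    rw [pow_succ', Module.End.mul_apply, hX.d_v_apply, ih, map_add, map_sum, sum_range_succ',
      δ₂_eq_smul_vPowδ₂, Module.End.mul_apply, Nat.add_sub_cancel, Nat.sub_zero, add_assoc]
    congr 2
    refine sum_congr rfl fun p hp => ?_
    rw [map_smul, ← vPowδ₂_succ, show m - (p + 1) = m - 1 - p by omega]

theorem d_pow_v_apply_of_d_eq (hX : X.IsSComplex) {x : X.Tot} {F : ℕ → R} {K : ℕ}
    (hx : X.d x = ∑ s ∈ range K, F s • X.vPowδ₂ s) (m : ℕ) :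
    X.d ((X.v ^ m) x) = ∑ s ∈ range K, F s • X.vPowδ₂ (m + s)
      + ∑ p ∈ range m, X.δ₁ ((X.v ^ (m - 1 - p)) x) • X.vPowδ₂ p := by
  simp only [hX.d_pow_v_apply, hx, map_sum, map_smul, pow_v_vPowδ₂]

end IsSComplex

section TensorFormulas

variable {A B : SComplexData R} (z : TTen A B)

theorem tensorS_d_fst :
    ((tensorS A B).d z).1 = map A.d LinearMap.id z.1 + map A.sign B.d z.1 := rfl

theorem tensorS_d_snd_fst :
    ((tensorS A B).d z).2.1 = map A.sign B.v z.1 - map (A.sign ∘ₗ A.v) LinearMap.id z.1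
      + (map A.d LinearMap.id z.2.1 - map A.sign B.d z.2.1)
      + map A.sign B.δ₂ ((TensorProduct.rid R A.Tot).symm z.2.2.1)
      - map A.δ₂ LinearMap.id ((TensorProduct.lid R B.Tot).symm z.2.2.2) := rfl

theorem tensorS_d_snd_snd_fst :
    ((tensorS A B).d z).2.2.1 = TensorProduct.rid R A.Tot (map A.sign B.δ₁ z.1) + A.d z.2.2.1 :=
  rfl

theorem tensorS_d_snd_snd_snd :
    ((tensorS A B).d z).2.2.2
      = TensorProduct.lid R B.Tot (map A.δ₁ LinearMap.id z.1) + B.d z.2.2.2 := rfl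

theorem tensorS_v_apply :
    (tensorS A B).v z =
      (map A.v LinearMap.id z.1 + map A.δ₂ LinearMap.id ((TensorProduct.lid R B.Tot).symm z.2.2.2),
        map A.v LinearMap.id z.2.1, A.v z.2.2.1,
        TensorProduct.lid R B.Tot (map A.δ₁ LinearMap.id z.2.1) + B.v z.2.2.2) := rfl

theorem tensorS_δ₁_apply : (tensorS A B).δ₁ z = A.δ₁ z.2.2.1 + B.δ₁ z.2.2.2 := rfl

variable (A B) in
noncomputable def vPowδ₂Tensor (k : ℕ) : A.Tot ⊗[R] B.Tot :=
  ∑ p ∈ range k, A.vPowδ₂ p ⊗ₜ[R] B.vPowδ₂ (k - 1 - p)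

theorem vPowδ₂Tensor_succ (k : ℕ) :
    vPowδ₂Tensor A B (k + 1)
      = map A.v LinearMap.id (vPowδ₂Tensor A B k) + A.vPowδ₂ 0 ⊗ₜ[R] B.vPowδ₂ k := by
  rw [vPowδ₂Tensor, vPowδ₂Tensor, sum_range_succ', map_sum, Nat.add_sub_cancel, Nat.sub_zero]
  congr 1
  refine sum_congr rfl fun p _ => ?_
  rw [map_tmul, LinearMap.id_apply, ← vPowδ₂_succ, show k - (p + 1) = k - 1 - p by omega]

theorem tensorS_vPowδ₂ (k : ℕ) :
    (tensorS A B).vPowδ₂ k = (vPowδ₂Tensor A B k, 0, A.vPowδ₂ k, B.vPowδ₂ k) := by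
  induction k with
  | zero => rw [vPowδ₂Tensor, sum_range_zero]; rfl
  | succ k ih =>
    rw [vPowδ₂_succ, ih, tensorS_v_apply, vPowδ₂Tensor_succ, vPowδ₂_succ, vPowδ₂_succ]
    simp only [TensorProduct.lid_symm_apply, map_tmul, LinearMap.id_apply, map_zero, zero_add,
      vPowδ₂_zero]
    rfl

end TensorFormulas

section ProductCycle

variable {A B : SComplexData R} (α : A.Tot) (β : B.Tot) (F G : ℕ → R) (K : ℕ)

noncomputable def mulCycleTot : TTen A B :=
  (∑ k ∈ range K, ∑ m ∈ range K, F (k + m + 1) • (A.vPowδ₂ k ⊗ₜ[R] (B.v ^ m) β)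
      + ∑ k ∈ range K, ∑ m ∈ range K, G (k + m + 1) • ((A.v ^ m) α ⊗ₜ[R] B.vPowδ₂ k),
    α ⊗ₜ[R] β, ∑ t ∈ range K, G t • (A.v ^ t) α, ∑ s ∈ range K, F s • (B.v ^ s) β)

noncomputable def mulCyclePoly (n : ℕ) : R :=
  ∑ q ∈ range K, A.δ₁ ((A.v ^ q) α) * G (n + 1 + q) + ∑ s ∈ range (n + 1), F s * G (n - s)
    + ∑ q ∈ range K, F (n + 1 + q) * B.δ₁ ((B.v ^ q) β)

variable {α β F G K}

theorem sum_mulCyclePoly_smul {M : Type*} [AddCommMonoid M] [Module R M] (φ : ℕ → M) :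
    ∑ n ∈ range K, mulCyclePoly α β F G K n • φ n
      = ∑ n ∈ range K, (∑ q ∈ range K, A.δ₁ ((A.v ^ q) α) * G (n + 1 + q)) • φ n
        + ∑ n ∈ range K, (∑ s ∈ range (n + 1), F s * G (n - s)) • φ n
        + ∑ n ∈ range K, (∑ q ∈ range K, F (n + 1 + q) * B.δ₁ ((B.v ^ q) β)) • φ n := by
  simp only [mulCyclePoly, add_smul, sum_add_distrib]

theorem tensorS_d_mulCycleTot_snd_snd_fst (hA : A.IsSComplex) (hB : B.IsSComplex) {N : ℕ}
    (hF : ∀ s, N ≤ s → F s = 0) (hG : ∀ t, N ≤ t → G t = 0) (hK : 2 * N ≤ K)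
    (hα : A.d α = ∑ s ∈ range K, F s • A.vPowδ₂ s) :
    ((tensorS A B).d (mulCycleTot α β F G K)).2.2.1
      = ∑ n ∈ range K, mulCyclePoly α β F G K n • A.vPowδ₂ n := by
  have hx₁ : TensorProduct.rid R A.Tot (map A.sign B.δ₁ (mulCycleTot α β F G K).1)
      = ∑ n ∈ range K, (∑ q ∈ range K, F (n + 1 + q) * B.δ₁ ((B.v ^ q) β)) • A.vPowδ₂ n := by
    simp only [mulCycleTot, map_add, map_sum, map_smul, map_tmul, hA.sign_vPowδ₂, hB.δ₁_vPowδ₂,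
      tmul_zero, smul_zero, sum_const_zero, add_zero, TensorProduct.rid_tmul, smul_smul, sum_smul]
    exact sum_congr rfl fun n _ => sum_congr rfl fun q _ => by rw [add_right_comm]
  have hx₃ : A.d (mulCycleTot α β F G K).2.2.1
      = ∑ n ∈ range K, (∑ s ∈ range (n + 1), F s * G (n - s)) • A.vPowδ₂ n
        + ∑ n ∈ range K, (∑ q ∈ range K, A.δ₁ ((A.v ^ q) α) * G (n + 1 + q)) • A.vPowδ₂ n := by
    simp only [mulCycleTot, map_sum, map_smul, hA.d_pow_v_apply_of_d_eq hα, smul_add,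
      sum_add_distrib]
    congr 1
    · rw [← sum_range_sum_range_mul_smul_eq K (mul_eq_zero_of_le_add hF hG hK), sum_comm]
      simp only [smul_sum, smul_smul, mul_comm (G _), add_comm _ (_ : ℕ)]
    · exact sum_range_smul_sum_range_eq K (fun t ht => hG t (by omega))
        (fun q => A.δ₁ ((A.v ^ q) α)) A.vPowδ₂
  rw [tensorS_d_snd_snd_fst, hx₁, hx₃, sum_mulCyclePoly_smul]
  abel

theorem tensorS_d_mulCycleTot_snd_snd_snd (hA : A.IsSComplex) (hB : B.IsSComplex) {N : ℕ}
    (hF : ∀ s, N ≤ s → F s = 0) (hG : ∀ t, N ≤ t → G t = 0) (hK : 2 * N ≤ K)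
    (hβ : B.d β = ∑ t ∈ range K, G t • B.vPowδ₂ t) :
    ((tensorS A B).d (mulCycleTot α β F G K)).2.2.2
      = ∑ n ∈ range K, mulCyclePoly α β F G K n • B.vPowδ₂ n := by
  have hx₁ : TensorProduct.lid R B.Tot (map A.δ₁ LinearMap.id (mulCycleTot α β F G K).1)
      = ∑ n ∈ range K, (∑ q ∈ range K, A.δ₁ ((A.v ^ q) α) * G (n + 1 + q)) • B.vPowδ₂ n := by
    simp only [mulCycleTot, map_add, map_sum, map_smul, map_tmul, hA.δ₁_vPowδ₂, zero_tmul,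
      smul_zero, sum_const_zero, zero_add, TensorProduct.lid_tmul, LinearMap.id_apply, smul_smul,
      sum_smul]
    exact sum_congr rfl fun n _ => sum_congr rfl fun q _ => by rw [add_right_comm, mul_comm]
  have hx₄ : B.d (mulCycleTot α β F G K).2.2.2
      = ∑ n ∈ range K, (∑ s ∈ range (n + 1), F s * G (n - s)) • B.vPowδ₂ n
        + ∑ n ∈ range K, (∑ q ∈ range K, F (n + 1 + q) * B.δ₁ ((B.v ^ q) β)) • B.vPowδ₂ n := by
    simp only [mulCycleTot, map_sum, map_smul, hB.d_pow_v_apply_of_d_eq hβ, smul_add,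
      sum_add_distrib]
    congr 1
    · rw [← sum_range_sum_range_mul_smul_eq K (mul_eq_zero_of_le_add hF hG hK)]
      simp only [smul_sum, smul_smul]
    · rw [sum_range_smul_sum_range_eq K (fun s hs => hF s (by omega))
        (fun q => B.δ₁ ((B.v ^ q) β)) B.vPowδ₂]
      simp only [mul_comm (B.δ₁ _)]
  rw [tensorS_d_snd_snd_snd, hx₁, hx₄, sum_mulCyclePoly_smul]
  abel

theorem tensorS_d_mulCycleTot_snd_fst (hA : A.IsSComplex) (hF : ∀ s, K ≤ s → F s = 0)
    (hG : ∀ t, K ≤ t → G t = 0) (hα : A.d α = ∑ s ∈ range K, F s • A.vPowδ₂ s)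
    (hβ : B.d β = ∑ t ∈ range K, G t • B.vPowδ₂ t) :
    ((tensorS A B).d (mulCycleTot α β F G K)).2.1 = 0 := by
  set ψ : ℕ → ℕ → A.Tot ⊗[R] B.Tot := fun k m => A.vPowδ₂ k ⊗ₜ[R] (B.v ^ m) β
  set χ : ℕ → ℕ → A.Tot ⊗[R] B.Tot := fun k m => A.sign ((A.v ^ m) α) ⊗ₜ[R] B.vPowδ₂ k
  have hx₁ : map A.sign B.v (mulCycleTot α β F G K).1
      - map (A.sign ∘ₗ A.v) LinearMap.id (mulCycleTot α β F G K).1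
      = ∑ n ∈ range K, F n • (ψ 0 n - ψ n 0) - ∑ n ∈ range K, G n • (χ 0 n - χ n 0) := by
    rw [← sum_range_sum_range_smul_sub_eq K hF, ← sum_range_sum_range_smul_sub_eq K hG]
    simp only [ψ, χ, mulCycleTot, map_add, map_sum, map_smul, map_tmul, LinearMap.comp_apply,
      LinearMap.id_apply, smul_sub, sum_sub_distrib, hA.sign_vPowδ₂, ← vPowδ₂_succ, v_pow_apply]
    abel
  have hαβ : map A.d LinearMap.id (α ⊗ₜ[R] β) - map A.sign B.d (α ⊗ₜ[R] β)
      = ∑ s ∈ range K, F s • ψ s 0 - ∑ t ∈ range K, G t • χ t 0 := by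
    simp only [ψ, χ, map_tmul, LinearMap.id_apply, hα, hβ, sum_tmul, tmul_sum, smul_tmul',
      tmul_smul, pow_zero, Module.End.one_apply]
  have hx₃ : map A.sign B.δ₂ ((TensorProduct.rid R A.Tot).symm (mulCycleTot α β F G K).2.2.1)
      = ∑ t ∈ range K, G t • χ 0 t := by
    simp only [χ, mulCycleTot, map_sum, map_smul, TensorProduct.rid_symm_apply, map_tmul,
      vPowδ₂_zero]
  have hx₄ : map A.δ₂ LinearMap.id ((TensorProduct.lid R B.Tot).symm (mulCycleTot α β F G K).2.2.2)
      = ∑ s ∈ range K, F s • ψ 0 s := by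
    simp only [ψ, mulCycleTot, map_sum, map_smul, TensorProduct.lid_symm_apply, map_tmul,
      LinearMap.id_apply, vPowδ₂_zero]
  rw [tensorS_d_snd_fst, hx₁, show (mulCycleTot α β F G K).2.1 = α ⊗ₜ[R] β from rfl, hαβ, hx₃,
    hx₄]
  simp only [smul_sub, sum_sub_distrib]
  abel

theorem tensorS_d_mulCycleTot_fst (hA : A.IsSComplex) (hB : B.IsSComplex) {N : ℕ}
    (hF : ∀ s, N ≤ s → F s = 0) (hG : ∀ t, N ≤ t → G t = 0) (hK : 2 * N ≤ K)
    (hα : A.d α = ∑ s ∈ range K, F s • A.vPowδ₂ s)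
    (hβ : B.d β = ∑ t ∈ range K, G t • B.vPowδ₂ t) :
    ((tensorS A B).d (mulCycleTot α β F G K)).1
      = ∑ n ∈ range K, mulCyclePoly α β F G K n • vPowδ₂Tensor A B n := by
  set φ : ℕ → ℕ → A.Tot ⊗[R] B.Tot := fun p q => A.vPowδ₂ p ⊗ₜ[R] B.vPowδ₂ q
  have hF' : ∀ s, K ≤ s → F s = 0 := fun s hs => hF s (by omega)
  have hG' : ∀ t, K ≤ t → G t = 0 := fun t ht => hG t (by omega)
  have hdA : map A.d LinearMap.id (mulCycleTot α β F G K).1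
      = ∑ k ∈ range K, ∑ m ∈ range K, G (k + m + 1) • ∑ s ∈ range K, F s • φ (m + s) k
        + ∑ k ∈ range K, ∑ m ∈ range K,
            G (k + m + 1) • ∑ p ∈ range m, A.δ₁ ((A.v ^ (m - 1 - p)) α) • φ p k := by
    simp only [φ, mulCycleTot, map_add, map_sum, map_smul, map_tmul, hA.d_vPowδ₂, zero_tmul,
      smul_zero, sum_const_zero, zero_add, LinearMap.id_apply, hA.d_pow_v_apply_of_d_eq hα,
      add_tmul, ← smul_tmul', sum_tmul, smul_add, sum_add_distrib]
  have hdB : map A.sign B.d (mulCycleTot α β F G K).1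
      = ∑ k ∈ range K, ∑ m ∈ range K, F (k + m + 1) • ∑ t ∈ range K, G t • φ k (m + t)
        + ∑ k ∈ range K, ∑ m ∈ range K,
            F (k + m + 1) • ∑ p ∈ range m, B.δ₁ ((B.v ^ (m - 1 - p)) β) • φ k p := by
    simp only [φ, mulCycleTot, map_add, map_sum, map_smul, map_tmul, hB.d_vPowδ₂, tmul_zero,
      smul_zero, sum_const_zero, add_zero, hA.sign_vPowδ₂, hB.d_pow_v_apply_of_d_eq hβ,
      tmul_add, tmul_sum, tmul_smul, smul_add, sum_add_distrib]
  have hreflect : ∀ n, ∑ p ∈ range n, φ (n - 1 - p) p = vPowδ₂Tensor A B n := fun n => by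
    rw [vPowδ₂Tensor, ← sum_range_reflect]
    refine sum_congr rfl fun p hp => ?_
    simp only [mem_range] at hp
    rw [show n - 1 - (n - 1 - p) = p by omega]
  have hD : ∀ n, ∑ p ∈ range n, φ p (n - 1 - p) = vPowδ₂Tensor A B n := fun n => rfl
  have hFG := sum_antidiag_smul_add_sum_antidiag_smul K N hF hG hK φ
  rw [tensorS_d_fst, hdA, hdB, sum_mulCyclePoly_smul,
    sum_range_sum_range_smul_sum_range_eq K hG' (fun q => A.δ₁ ((A.v ^ q) α)) fun p k => φ k p,
    sum_range_sum_range_smul_sum_range_eq K hF' (fun q => B.δ₁ ((B.v ^ q) β))]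
  simp only [hreflect, hD, mul_comm (G _)] at hFG ⊢
  rw [← hFG]
  abel

theorem mulCyclePoly_eq_zero {N : ℕ} (hF : ∀ s, N ≤ s → F s = 0) (hG : ∀ t, N ≤ t → G t = 0)
    (hK : 2 * N ≤ K) {n : ℕ} (hn : K ≤ n) : mulCyclePoly α β F G K n = 0 := by
  have hconv : ∑ s ∈ range (n + 1), F s * G (n - s) = 0 := sum_eq_zero fun s hs =>
    mul_eq_zero_of_le_add hF hG hK s (n - s) (by simp only [mem_range] at hs; omega)
  have hα : ∑ q ∈ range K, A.δ₁ ((A.v ^ q) α) * G (n + 1 + q) = 0 :=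
    sum_eq_zero fun q _ => by rw [hG _ (by omega), mul_zero]
  have hβ : ∑ q ∈ range K, F (n + 1 + q) * B.δ₁ ((B.v ^ q) β) = 0 :=
    sum_eq_zero fun q _ => by rw [hF _ (by omega), zero_mul]
  rw [mulCyclePoly, hconv, hα, hβ, add_zero, add_zero]

theorem tensorS_d_mulCycleTot (hA : A.IsSComplex) (hB : B.IsSComplex) {N : ℕ}
    (hF : ∀ s, N ≤ s → F s = 0) (hG : ∀ t, N ≤ t → G t = 0) (hK : 2 * N ≤ K)
    (hα : A.d α = ∑ s ∈ range K, F s • A.vPowδ₂ s)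
    (hβ : B.d β = ∑ t ∈ range K, G t • B.vPowδ₂ t) :
    (tensorS A B).d (mulCycleTot α β F G K)
      = ∑ n ∈ range K, mulCyclePoly α β F G K n • (tensorS A B).vPowδ₂ n := by
  simp only [tensorS_vPowδ₂]
  -- `(tensorS A B).Tot` is `TTen A B` only up to unfolding, so move the sum there first.
  change _ = ∑ n ∈ range K, (mulCyclePoly α β F G K n • (vPowδ₂Tensor A B n, 0, A.vPowδ₂ n,
    B.vPowδ₂ n) : TTen A B)
  refine Prod.ext ?_ (Prod.ext ?_ (Prod.ext ?_ ?_)) <;>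
    simp only [Prod.fst_sum, Prod.snd_sum, Prod.smul_fst, Prod.smul_snd]
  · exact tensorS_d_mulCycleTot_fst hA hB hF hG hK hα hβ
  · rw [tensorS_d_mulCycleTot_snd_fst hA (fun s hs => hF s (by omega))
      (fun t ht => hG t (by omega)) hα hβ]
    simp
  · exact tensorS_d_mulCycleTot_snd_snd_fst hA hB hF hG hK hα
  · exact tensorS_d_mulCycleTot_snd_snd_snd hA hB hF hG hK hβ

variable (α β) in
theorem tensorS_pow_v_apply (x₁ : A.Tot ⊗[R] B.Tot) (x₃ : A.Tot) (x₄ : B.Tot) (m : ℕ) :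
    ∃ y, ((tensorS A B).v ^ m) ((x₁, α ⊗ₜ[R] β, x₃, x₄) : TTen A B)
      = (y, (A.v ^ m) α ⊗ₜ[R] β, (A.v ^ m) x₃,
          (B.v ^ m) x₄ + ∑ p ∈ range m, A.δ₁ ((A.v ^ (m - 1 - p)) α) • (B.v ^ p) β) := by
  induction m with
  | zero => exact ⟨x₁, by rw [pow_zero, sum_range_zero, add_zero]; rfl⟩
  | succ m ih =>
    obtain ⟨y, hy⟩ := ih
    refine ⟨map A.v LinearMap.id y + map A.δ₂ LinearMap.id ((TensorProduct.lid R B.Tot).symm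
      ((B.v ^ m) x₄ + ∑ p ∈ range m, A.δ₁ ((A.v ^ (m - 1 - p)) α) • (B.v ^ p) β)), ?_⟩
    rw [pow_succ']
    change (tensorS A B).v (((tensorS A B).v ^ m) _) = _
    rw [hy, tensorS_v_apply]
    refine Prod.ext rfl (Prod.ext ?_ (Prod.ext ?_ ?_))
    · simp [v_pow_apply]
    · simp [v_pow_apply]
    · simp only [map_tmul, LinearMap.id_apply, v_pow_apply, map_add, map_sum, map_smul,
        TensorProduct.lid_tmul, sum_range_succ' _ m, Nat.add_sub_cancel, Nat.sub_zero, pow_zero,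
        Module.End.one_apply]
      have e : ∑ k ∈ range m, A.δ₁ ((A.v ^ (m - (k + 1))) α) • (B.v ^ (k + 1)) β
          = ∑ k ∈ range m, A.δ₁ ((A.v ^ (m - 1 - k)) α) • (B.v ^ (k + 1)) β :=
        sum_congr rfl fun k _ => by rw [Nat.sub_add_eq, Nat.sub_right_comm]
      rw [e]
      abel

theorem tensorS_δ₁_pow_v_mulCycleTot (m : ℕ) :
    (tensorS A B).δ₁ (((tensorS A B).v ^ m) (mulCycleTot α β F G K))
      = ∑ q ∈ range K, A.δ₁ ((A.v ^ (m + q)) α) * G q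
        + ∑ j ∈ range m, A.δ₁ ((A.v ^ (m - 1 - j)) α) * B.δ₁ ((B.v ^ j) β)
        + ∑ q ∈ range K, F q * B.δ₁ ((B.v ^ (m + q)) β) := by
  obtain ⟨y, hy⟩ := tensorS_pow_v_apply α β (mulCycleTot α β F G K).1 _ _ m
  rw [show mulCycleTot α β F G K = ((mulCycleTot α β F G K).1, α ⊗ₜ[R] β, _, _) from rfl, hy,
    tensorS_δ₁_apply]
  simp only [map_add, map_sum, map_smul, smul_eq_mul, ← Module.End.mul_apply, ← pow_add,
    mul_comm (G _)]
  abel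

end ProductCycle

section Iota

variable {X : SComplexData R} {z : X.Small}

theorem iota_apply_of_eq_neg {k : ℤ} {q : ℕ} (h : k = -q - 1) :
    (X.iota z).1 k = X.δ₁ ((X.v ^ q) z.1) := by
  change (if k < 0 then _ else _) = _
  rw [if_pos (by omega), show (-k - 1).toNat = q by omega]

theorem iota_apply_of_eq_natCast {k : ℤ} {s : ℕ} (h : k = s) : (X.iota z).1 k = z.2.1 s := by
  change (if k < 0 then _ else _) = _
  rw [if_neg (by omega), show k.toNat = s by omega]

theorem iota_apply_eq_zero {N : ℕ} (hz : ∀ s, N ≤ s → z.2.1 s = 0) {k : ℤ} (hk : N ≤ k) :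
    (X.iota z).1 k = 0 := by
  rw [iota_apply_of_eq_natCast (s := k.toNat) (by omega), hz _ (by omega)]

end Iota

section LmulIota

variable {A B : SComplexData R} {zA : A.Small} {zB : B.Small} {N K : ℕ}

theorem lmul_iota_apply_natCast (hzA : ∀ s, N ≤ s → zA.2.1 s = 0)
    (hzB : ∀ t, N ≤ t → zB.2.1 t = 0) (hK : N ≤ K) (n : ℕ) :
    (lmul (A.iota zA) (B.iota zB)).1 n = mulCyclePoly zA.1 zB.1 zA.2.1 zB.2.1 K n := by
  rw [lmul_apply, finsum_int_eq_sum_three_ranges (a := 0) (b := n + 1) (by omega) K fun k hk => ?_,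
    show ((n : ℤ) + 1 - 0).toNat = n + 1 by omega, mulCyclePoly]
  · congr 1
    congr 1
    · refine sum_congr rfl fun q _ => ?_
      rw [iota_apply_of_eq_neg (q := q) (by omega), iota_apply_of_eq_natCast (s := n + 1 + q)
        (by push_cast; omega)]
    · refine sum_congr rfl fun j hj => ?_
      simp only [mem_range] at hj
      rw [iota_apply_of_eq_natCast (s := j) (by omega), iota_apply_of_eq_natCast (s := n - j)
        (by omega)]
    · refine sum_congr rfl fun q _ => ?_
      rw [iota_apply_of_eq_natCast (s := n + 1 + q) (by push_cast; omega),
        iota_apply_of_eq_neg (q := q) (by omega)]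
  · rcases hk with hk | hk
    · rw [iota_apply_eq_zero hzB (by omega), mul_zero]
    · rw [iota_apply_eq_zero hzA (by omega), zero_mul]

theorem lmul_iota_apply_neg_sub_one (hzA : ∀ s, N ≤ s → zA.2.1 s = 0)
    (hzB : ∀ t, N ≤ t → zB.2.1 t = 0) (hK : N ≤ K) (m : ℕ) :
    (lmul (A.iota zA) (B.iota zB)).1 (-m - 1)
      = ∑ q ∈ range K, A.δ₁ ((A.v ^ (m + q)) zA.1) * zB.2.1 q
        + ∑ j ∈ range m, A.δ₁ ((A.v ^ (m - 1 - j)) zA.1) * B.δ₁ ((B.v ^ j) zB.1)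
        + ∑ q ∈ range K, zA.2.1 q * B.δ₁ ((B.v ^ (m + q)) zB.1) := by
  rw [lmul_apply, finsum_int_eq_sum_three_ranges (a := -m) (b := 0) (by omega) K fun k hk => ?_,
    show (0 - -(m : ℤ)).toNat = m by omega]
  · congr 1
    congr 1
    · refine sum_congr rfl fun q _ => ?_
      rw [iota_apply_of_eq_neg (q := m + q) (by push_cast; omega),
        iota_apply_of_eq_natCast (s := q) (by omega)]
    · refine sum_congr rfl fun j hj => ?_
      simp only [mem_range] at hj
      rw [iota_apply_of_eq_neg (q := m - 1 - j) (by omega), iota_apply_of_eq_neg (q := j)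
        (by omega)]
    · refine sum_congr rfl fun q _ => ?_
      rw [iota_apply_of_eq_natCast (s := q) (by omega),
        iota_apply_of_eq_neg (q := m + q) (by push_cast; omega)]
  · rcases hk with hk | hk
    · rw [iota_apply_eq_zero hzB (by omega), mul_zero]
    · rw [iota_apply_eq_zero hzA (by omega), zero_mul]

end LmulIota

theorem lmul_mem_JJ_tensorS {A B : SComplexData R} (hA : A.IsSComplex) (hB : B.IsSComplex)
    {P Q : ↥(IntBdd R R)} (hP : P ∈ A.JJ) (hQ : Q ∈ B.JJ) : lmul P Q ∈ (tensorS A B).JJ := by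
  obtain ⟨⟨α, F⟩, hzA, rfl⟩ := hP
  obtain ⟨⟨β, G⟩, hzB, rfl⟩ := hQ
  obtain ⟨N, hF, hG⟩ : ∃ N, (∀ s, N ≤ s → F.1 s = 0) ∧ ∀ t, N ≤ t → G.1 t = 0 := by
    obtain ⟨NF, hNF⟩ := F.2
    obtain ⟨NG, hNG⟩ := G.2
    exact ⟨NF + NG + 1, fun s hs => hNF s (by omega), fun t ht => hNG t (by omega)⟩
  have hα : A.d α = ∑ s ∈ range (2 * N), F.1 s • A.vPowδ₂ s := by
    rw [smallD_eq_zero_iff.mp hzA, sumV_eq_sum (K := 2 * N) fun s hs => hF s (by omega)]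
  have hβ : B.d β = ∑ t ∈ range (2 * N), G.1 t • B.vPowδ₂ t := by
    rw [smallD_eq_zero_iff.mp hzB, sumV_eq_sum (K := 2 * N) fun t ht => hG t (by omega)]
  have hpoly : ∀ n, 2 * N ≤ n → mulCyclePoly α β F.1 G.1 (2 * N) n = 0 :=
    fun n hn => mulCyclePoly_eq_zero hF hG le_rfl hn
  refine ⟨(mulCycleTot α β F.1 G.1 (2 * N),
    ⟨mulCyclePoly α β F.1 G.1 (2 * N), 2 * N, fun n hn => hpoly n hn.le⟩),
    smallD_eq_zero_iff.mpr ?_, ?_⟩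
  · rw [sumV_eq_sum hpoly]
    exact tensorS_d_mulCycleTot hA hB hF hG le_rfl hα hβ
  · refine Subtype.ext (funext fun k => ?_)
    rcases lt_or_ge k 0 with hk | hk
    · obtain ⟨m, rfl⟩ : ∃ m : ℕ, k = -m - 1 := ⟨(-k - 1).toNat, by omega⟩
      rw [iota_apply_of_eq_neg rfl, lmul_iota_apply_neg_sub_one (K := 2 * N) hF hG (by omega)]
      exact tensorS_δ₁_pow_v_mulCycleTot m
    · obtain ⟨n, rfl⟩ := Int.eq_ofNat_of_zero_le hk
      rw [iota_apply_of_eq_natCast rfl, lmul_iota_apply_natCast (K := 2 * N) hF hG (by omega)]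

end SComplexData

open SComplexData in
theorem statement10_general {R : Type u} [CommRing R]
    (A B : SComplexData R) (hA : A.IsSComplex) (hB : B.IsSComplex) (i j : ℤ) :
    ∀ a ∈ A.Jideal i, ∀ b ∈ B.Jideal j, a * b ∈ (tensorS A B).Jideal (i + j) := by
  rintro _ ⟨P, hP, hPi, rfl⟩ _ ⟨Q, hQ, hQj, rfl⟩
  exact ⟨lmul P Q, lmul_mem_JJ_tensorS hA hB hP hQ, fun _ hm => lmul_apply_eq_zero_of_lt hPi hQj hm,
    lmul_apply_neg_add hPi hQj⟩

open SComplexData in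
/-- **Statement 10.** For S-complexes over an integral domain and `i, j ∈ ℤ`:
`J_i(C̃) · J_j(C̃') ⊆ J_{i+j}(C̃ ⊗ C̃')`. -/
theorem statement10 {R : Type u} [CommRing R] [IsDomain R]
    (A B : SComplexData R) (hA : A.IsSComplex) (hB : B.IsSComplex) (i j : ℤ) :
    ∀ a ∈ A.Jideal i, ∀ b ∈ B.Jideal j, a * b ∈ (tensorS A B).Jideal (i + j) :=
  statement10_general A B hA hB i j
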